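/- Let κ̃ > 0 and Q be real constants and let u⁻ < u⁺ be real numbers with τ = κ̃·(u⁺ − u⁻). If I : ℝ → ℝ is differentiable on [u⁻,u⁺] and satisfies I'(u) + κ̃·I(u) = Q for all u ∈ [u⁻,u⁺], then the average of I over the segment satisfies (1/(u⁺ − u⁻)) ∫_{u⁻}^{u⁺} I(u) du = α·I(u⁻) + (1 − α)·I(u⁺), where α = 1/τ − e^{−τ}/(1 − e^{−τ}). -/

import Mathlib

/-!
Along the segment, `κ I - Q` decays like `exp (-κ u)`, so `κ I(u⁺) - Q = e^{-τ} (κ I(u⁻) - Q)`;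
integrating the equation itself gives `κ ∫ I = Q (u⁺ - u⁻) - (I(u⁺) - I(u⁻))`.
Eliminating the source `Q` between these two relations leaves the average of `I` as the stated
combination of the endpoint values.
-/

open Set

section LinearODE

variable {f : ℝ → ℝ} {κ Q a b : ℝ}

theorem integral_eq_of_hasDerivWithinAt_sub_mul (hab : a ≤ b)
    (hf : ∀ x ∈ Icc a b, HasDerivWithinAt f (Q - κ * f x) (Icc a b) x) :
    κ * ∫ u in a..b, f u = Q * (b - a) - (f b - f a) := by
  have hcont : ContinuousOn f (Icc a b) := fun x hx => (hf x hx).continuousWithinAt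
  have hint : IntervalIntegrable (fun u => Q - κ * f u) MeasureTheory.volume a b :=
    (continuousOn_const.sub (continuousOn_const.mul hcont)).intervalIntegrable_of_Icc hab
  have hftc : ∫ u in a..b, (Q - κ * f u) = f b - f a :=
    intervalIntegral.integral_eq_sub_of_hasDerivAt_of_le hab hcont
      (fun x hx => (hf x (Ioo_subset_Icc_self hx)).hasDerivAt (Icc_mem_nhds hx.1 hx.2)) hint
  rw [intervalIntegral.integral_sub intervalIntegrable_const
    ((hcont.intervalIntegrable_of_Icc hab).const_mul κ), intervalIntegral.integral_const,
    intervalIntegral.integral_const_mul, smul_eq_mul] at hftc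
  linarith

theorem mul_sub_eq_exp_mul_of_hasDerivWithinAt_sub_mul
    (hf : ∀ x ∈ Icc a b, HasDerivWithinAt f (Q - κ * f x) (Icc a b) x) :
    ∀ x ∈ Icc a b, κ * f x - Q = Real.exp (-(κ * (x - a))) * (κ * f a - Q) := by
  set g : ℝ → ℝ := fun u => Real.exp (κ * u) * (κ * f u - Q)
  have hg : ∀ x ∈ Icc a b, HasDerivWithinAt g 0 (Icc a b) x := fun x hx => by
    have hexp : HasDerivAt (fun u => Real.exp (κ * u)) (Real.exp (κ * x) * κ) x := by
      simpa using ((hasDerivAt_id x).const_mul κ).exp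
    exact (hexp.hasDerivWithinAt.mul (((hf x hx).const_mul κ).sub_const Q)).congr_deriv
      (by ring)
  have hconst := constant_of_has_deriv_right_zero
    (fun x hx => (hg x hx).continuousWithinAt)
    (fun x hx => (hg x (Ico_subset_Icc_self hx)).mono_of_mem_nhdsWithin
      (Icc_mem_nhdsGE_of_mem hx))
  intro x hx
  have hgx : Real.exp (κ * x) * (κ * f x - Q) = Real.exp (κ * a) * (κ * f a - Q) := hconst x hx
  rw [show -(κ * (x - a)) = κ * a - κ * x by ring, Real.exp_sub, div_mul_eq_mul_div, ← hgx]
  field_simp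

end LinearODE

theorem average_eq_weighted_endpoints {κ L Q A B S : ℝ} (hκ : κ ≠ 0) (hL : L ≠ 0)
    (hS : κ * S = Q * L - (B - A))
    (hB : κ * B - Q = Real.exp (-(κ * L)) * (κ * A - Q)) :
    (1 / L) * S =
      (1 / (κ * L) - Real.exp (-(κ * L)) / (1 - Real.exp (-(κ * L)))) * A +
      (1 - (1 / (κ * L) - Real.exp (-(κ * L)) / (1 - Real.exp (-(κ * L))))) * B := by
  set E := Real.exp (-(κ * L))
  have hE : 1 - E ≠ 0 := by
    rw [sub_ne_zero, ne_comm, Ne, Real.exp_eq_one_iff, neg_eq_zero]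
    exact mul_ne_zero hκ hL
  have hQ : Q = κ * (B - E * A) / (1 - E) := by
    field_simp
    linarith
  have hSQ : S = (Q * L - (B - A)) / κ := by
    field_simp
    linarith
  rw [hSQ, hQ]
  field_simp
  ring

/-- **Segment-average intensity formula of the method of long characteristics.**
If `I` is differentiable on the characteristic segment `[u⁻, u⁺]` and satisfies
`I'(u) + κ̃ I(u) = Q` there (constant `κ̃ > 0` and `Q`), then the average of `I`
over the segment is the combination `α I(u⁻) + (1 - α) I(u⁺)` of the incoming and
outgoing intensities, with weight `α = 1/τ - e^{-τ}/(1 - e^{-τ})` where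
`τ = κ̃ (u⁺ - u⁻)` is the optical thickness of the segment. -/
theorem characteristic_segment_average
    (κ Q : ℝ) (hκ : 0 < κ) (um up : ℝ) (hu : um < up)
    (I : ℝ → ℝ)
    (hdiff : DifferentiableOn ℝ I (Set.Icc um up))
    (hode : ∀ u ∈ Set.Icc um up, derivWithin I (Set.Icc um up) u + κ * I u = Q) :
    (1 / (up - um)) * ∫ u in um..up, I u =
      (1 / (κ * (up - um)) -
          Real.exp (-(κ * (up - um))) / (1 - Real.exp (-(κ * (up - um))))) * I um +
      (1 - (1 / (κ * (up - um)) -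
          Real.exp (-(κ * (up - um))) / (1 - Real.exp (-(κ * (up - um)))))) * I up := by
  have hI : ∀ x ∈ Icc um up, HasDerivWithinAt I (Q - κ * I x) (Icc um up) x := fun x hx => by
    rw [← eq_sub_of_add_eq (hode x hx)]
    exact (hdiff x hx).hasDerivWithinAt
  exact average_eq_weighted_endpoints hκ.ne' (sub_ne_zero.2 hu.ne')
    (integral_eq_of_hasDerivWithinAt_sub_mul hu.le hI)
    (mul_sub_eq_exp_mul_of_hasDerivWithinAt_sub_mul hI up (right_mem_Icc.2 hu.le))
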